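/- Let κ, m, t* > 0 and suppose that either mκ ≤ 1/4, or mκ > 1/4 and t* ≤ πm/√(4mκ−1) + (2m/√(4mκ−1)) · arcsin(1/√(4mκ)). Let N ≥ 1 and ν₁,…,ν_N ∈ ℝ be arbitrary, and let (θ₁,…,θ_N) and (φ₁,…,φ_N) be two global solutions of the inertial Kuramoto model with inertia m, coupling strength κ, and natural frequencies ν₁,…,ν_N. If θ̇ᵢ(0) = φ̇ᵢ(0) for all i and θᵢ(t*) = φᵢ(t*) for all i, then θ̇ᵢ(t*) = φ̇ᵢ(t*) for all i. -/

import Mathlib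

open Filter Topology MeasureTheory intervalIntegral

noncomputable section

/-- A global smooth solution of the inertial Kuramoto model
`m θ̈ᵢ + θ̇ᵢ = νᵢ + (κ/N) ∑ⱼ sin(θⱼ - θᵢ)` with initial data `θᵢ(0) = θ0 i`,
`θ̇ᵢ(0) = ω0 i`. -/
def IsInertialSol (N : ℕ) (m κ : ℝ) (ν θ0 ω0 : Fin N → ℝ) (θ : Fin N → ℝ → ℝ) : Prop :=
  (∀ i, ContDiff ℝ (⊤ : ℕ∞) (θ i)) ∧
  (∀ i, θ i 0 = θ0 i) ∧
  (∀ i, deriv (θ i) 0 = ω0 i) ∧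
  (∀ i, ∀ t : ℝ, 0 ≤ t →
    m * deriv (deriv (θ i)) t + deriv (θ i) t
      = ν i + (κ / N) * ∑ j, Real.sin (θ j t - θ i t))

/-- A global smooth solution of the first-order Kuramoto model
`θ̇ᵢ = νᵢ + (κ/N) ∑ⱼ sin(θⱼ - θᵢ)` with initial data `θᵢ(0) = θ0 i`. -/
def IsFirstOrderSol (N : ℕ) (κ : ℝ) (ν θ0 : Fin N → ℝ) (θ : Fin N → ℝ → ℝ) : Prop :=
  (∀ i, ContDiff ℝ (⊤ : ℕ∞) (θ i)) ∧
  (∀ i, θ i 0 = θ0 i) ∧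
  (∀ i, ∀ t : ℝ, 0 ≤ t →
    deriv (θ i) t = ν i + (κ / N) * ∑ j, Real.sin (θ j t - θ i t))

open Set

lemma abs_sin_lt_abs {x : ℝ} (hx : x ≠ 0) : |Real.sin x| < |x| := by
  wlog hpos : 0 < x generalizing x
  · have hneg : 0 < -x := by cases' hx.lt_or_gt with h h <;> [linarith; exact absurd h hpos]
    simpa [Real.sin_neg] using this (x := -x) (by intro hh; apply hx; linarith) hneg
  have h1 : Real.sin x < x := Real.sin_lt hpos
  have h2 : -x < Real.sin x := by
    rcases le_or_gt x 1 with h | h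
    · have : 0 < Real.sin x := Real.sin_pos_of_pos_of_lt_pi hpos (by linarith [Real.pi_gt_three])
      linarith
    · linarith [Real.neg_one_le_sin x]
  rw [abs_of_pos hpos, abs_lt]
  exact ⟨h2, h1⟩

lemma abs_sin_sub_sin_lt {a b : ℝ} (h : a ≠ b) : |Real.sin a - Real.sin b| < |a - b| := by
  have h2 : (a - b)/2 ≠ 0 := by intro hh; apply h; linarith [hh]
  calc |Real.sin a - Real.sin b| = |2 * Real.sin ((a-b)/2) * Real.cos ((a+b)/2)| := by
        rw [Real.sin_sub_sin]
    _ ≤ 2 * |Real.sin ((a-b)/2)| * 1 := by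
        rw [abs_mul, abs_mul, abs_two]; gcongr; exact Real.abs_cos_le_one _
    _ < 2 * |(a-b)/2| * 1 := by gcongr; exact abs_sin_lt_abs h2
    _ = |a - b| := by rw [abs_div]; simp; ring

lemma abs_sin_sub_sin_le (a b : ℝ) : |Real.sin a - Real.sin b| ≤ |a - b| := by
  rcases eq_or_ne a b with rfl | h
  · simp
  · exact (abs_sin_sub_sin_lt h).le

lemma key_sum {N : ℕ} (hN : 0 < N) {κ : ℝ} (hκ : 0 < κ) (a b : Fin N → ℝ)
    (hne : ∃ i, a i ≠ b i) :
    0 < ∑ i, (a i - b i) * ((κ / N) * ∑ j, (Real.sin (a j - a i) - Real.sin (b j - b i)))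
        + κ * ∑ i, (a i - b i)^2 := by
  set u : Fin N → ℝ := fun i => a i - b i with hu
  set s : Fin N → Fin N → ℝ := fun i j => Real.sin (a j - a i) - Real.sin (b j - b i) with hs
  set E : ℝ := ∑ i, ∑ j, u i * s i j with hE
  set B : ℝ := ∑ i, ∑ j, u j * s i j with hB
  set S : ℝ := ∑ i, u i with hS
  set Q : ℝ := ∑ i, (u i)^2 with hQ
  have hNR : (0:ℝ) < N := by exact_mod_cast hN
  have hanti : ∀ i j, s j i = - s i j := by
    intro i j
    show Real.sin (a i - a j) - Real.sin (b i - b j) = -(Real.sin (a j - a i) - Real.sin (b j - b i))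
    rw [← neg_sub (a j) (a i), ← neg_sub (b j) (b i), Real.sin_neg, Real.sin_neg]; ring
  have hEB : B = -E := by
    rw [hE, Finset.sum_comm, hB]
    rw [← Finset.sum_neg_distrib]
    apply Finset.sum_congr rfl; intro i _
    rw [← Finset.sum_neg_distrib]
    apply Finset.sum_congr rfl; intro j _
    rw [hanti i j]; ring
  have hA : ∑ i, ∑ j, (u i - u j) * s i j = 2*E := by
    have : ∑ i, ∑ j, (u i - u j) * s i j = E - B := by
      rw [hE, hB, ← Finset.sum_sub_distrib]
      apply Finset.sum_congr rfl; intro i _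
      rw [← Finset.sum_sub_distrib]
      apply Finset.sum_congr rfl; intro j _; ring
    rw [this, hEB]; ring
  have hsq : ∑ i, ∑ j, (u i - u j)^2 = 2*N*Q - 2*S^2 := by
    have hin : ∀ i : Fin N, ∑ j, (u i - u j)^2 = N*(u i)^2 - 2*(u i)*S + Q := by
      intro i
      have e0 : ∀ j : Fin N, (u i - u j)^2 = (u i)^2 - 2*(u i * u j) + (u j)^2 := fun j => by ring
      have e2 : ∑ j, 2*(u i * u j) = 2*(u i)*S := by
        rw [hS, Finset.mul_sum]
        exact Finset.sum_congr rfl fun j _ => by ring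
      rw [Finset.sum_congr rfl (fun j _ => e0 j), Finset.sum_add_distrib,
        Finset.sum_sub_distrib, e2, Finset.sum_const, Finset.card_univ, nsmul_eq_mul, ← hQ,
        Fintype.card_fin]
    have e3 : ∑ i, ((N:ℝ)*(u i)^2) = N*Q := by rw [hQ, Finset.mul_sum]
    have e4 : ∑ i, 2*(u i)*S = 2*S^2 := by
      have : ∑ i, 2*(u i)*S = (2*S) * ∑ i, u i := by
        rw [Finset.mul_sum]; exact Finset.sum_congr rfl fun j _ => by ring
      rw [this, ← hS]; ring
    have e5 : ∑ _i : Fin N, Q = N*Q := by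
      rw [Finset.sum_const, Finset.card_univ, nsmul_eq_mul, Fintype.card_fin]
    rw [Finset.sum_congr rfl (fun i _ => hin i), Finset.sum_add_distrib, Finset.sum_sub_distrib,
      e3, e4, e5]
    ring
  have hTnn : ∀ i j : Fin N, 0 ≤ (u i - u j) * s i j + (u i - u j)^2 := by
    intro i j
    rcases eq_or_ne (u i) (u j) with h | h
    · simp [h]
    · have hab : (a j - a i) ≠ (b j - b i) := by
        intro hh; apply h; have : u j - u i = 0 := by rw [hu]; simp only []; linarith [hh]
        linarith
      have h1 : |s i j| < |a j - a i - (b j - b i)| := abs_sin_sub_sin_lt hab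
      have h2 : |a j - a i - (b j - b i)| = |u i - u j| := by
        rw [hu]; simp only []; rw [abs_sub_comm]; ring_nf
      nlinarith [abs_nonneg (u i - u j), neg_abs_le ((u i - u j) * s i j),
        abs_mul (u i - u j) (s i j), sq_abs (u i - u j)]
  have hTpos : 0 < ∑ i, ∑ j, ((u i - u j) * s i j + (u i - u j)^2) + 2*S^2 := by
    by_cases hall : ∀ i j, u i = u j
    · obtain ⟨i0, hi0⟩ := hne
      have hc : u i0 ≠ 0 := sub_ne_zero_of_ne hi0
      have hSS : S = N * u i0 := by
        rw [hS, Finset.sum_congr rfl (fun j _ => hall j i0), Finset.sum_const, Finset.card_univ]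
        simp [nsmul_eq_mul]
      have hS0 : S ≠ 0 := by rw [hSS]; exact mul_ne_zero (ne_of_gt hNR) hc
      have hS2 : 0 < S^2 := by rcases hS0.lt_or_gt with h | h <;> nlinarith
      have hsum : 0 ≤ ∑ i, ∑ j, ((u i - u j) * s i j + (u i - u j)^2) :=
        Finset.sum_nonneg fun i _ => Finset.sum_nonneg fun j _ => hTnn i j
      linarith
    · push_neg at hall
      obtain ⟨i0, j0, hij⟩ := hall
      have hpos : 0 < ∑ i, ∑ j, ((u i - u j) * s i j + (u i - u j)^2) := by
        apply Finset.sum_pos'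
        · intro i _; exact Finset.sum_nonneg fun j _ => hTnn i j
        · refine ⟨i0, Finset.mem_univ _, Finset.sum_pos' (fun j _ => hTnn i0 j) ⟨j0, Finset.mem_univ _, ?_⟩⟩
          have h := sub_ne_zero_of_ne hij
          have hab : (a j0 - a i0) ≠ (b j0 - b i0) := by
            intro hh; apply hij; have : u j0 - u i0 = 0 := by rw [hu]; simp only []; linarith [hh]
            linarith
          have h1 : |s i0 j0| < |a j0 - a i0 - (b j0 - b i0)| := abs_sin_sub_sin_lt hab
          have h2 : |a j0 - a i0 - (b j0 - b i0)| = |u i0 - u j0| := by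
            rw [hu]; simp only []; rw [abs_sub_comm]; ring_nf
          nlinarith [neg_abs_le ((u i0 - u j0) * s i0 j0), abs_mul (u i0 - u j0) (s i0 j0),
            sq_abs (u i0 - u j0), abs_pos.mpr h]
      positivity
  have hfinal : ∑ i, u i * ((κ / N) * ∑ j, s i j) + κ * Q
      = (κ/(2*N)) * (∑ i, ∑ j, ((u i - u j) * s i j + (u i - u j)^2) + 2*S^2) := by
    have h1 : ∑ i, u i * ((κ / N) * ∑ j, s i j) = (κ/N) * E := by
      rw [hE, Finset.mul_sum]
      apply Finset.sum_congr rfl; intro i _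
      rw [Finset.mul_sum, Finset.mul_sum, Finset.mul_sum]
      apply Finset.sum_congr rfl; intro j _; ring
    have h2 : ∑ i, ∑ j, ((u i - u j) * s i j + (u i - u j)^2)
        = 2*E + (2*N*Q - 2*S^2) := by
      rw [← hA, ← hsq, ← Finset.sum_add_distrib]
      apply Finset.sum_congr rfl; intro i _; rw [← Finset.sum_add_distrib]
    rw [h1, h2]; field_simp; ring
  show 0 < ∑ i, u i * ((κ / ↑N) * ∑ j, s i j) + κ * Q
  rw [hfinal]
  exact mul_pos (by positivity) hTpos

open Filter Topology Set

lemma core_comparison {m κ T : ℝ} (hm : 0 < m) (hT : 0 < T)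
    {Q Q1 Q2 P y yd ydd : ℝ → ℝ}
    (hQd : ∀ t, HasDerivAt Q (Q1 t) t)
    (hQ1d : ∀ t, HasDerivAt Q1 (Q2 t) t)
    (hyd : ∀ t, HasDerivAt y (yd t) t)
    (hydd : ∀ t, HasDerivAt yd (ydd t) t)
    (hQnn : ∀ t, 0 ≤ Q t)
    (hQT : Q T = 0)
    (hQ10 : Q1 0 = 0)
    (hPc : Continuous P)
    (hCS : ∀ t, (Q1 t)^2 ≤ 4 * P t * Q t)
    (hkey : ∀ t, 0 ≤ t → t ≤ T → 0 < Q t →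
      m * (Q1 t)^2 < (m * Q2 t + Q1 t + 2*κ*Q t) * (2 * Q t))
    (hy0 : 0 < y 0)
    (hypos : ∀ t, 0 ≤ t → t < T → 0 < y t)
    (hyd0 : yd 0 ≤ 0)
    (hyineq : ∀ t, 0 ≤ t → t ≤ T → m * ydd t + yd t + κ * y t ≤ 0) :
    Q 0 = 0 := by
  by_contra hQ0'
  have hQ0 : 0 < Q 0 := (hQnn 0).lt_of_ne (Ne.symm hQ0')
  have hQc : Continuous Q := Differentiable.continuous (fun t => (hQd t).differentiableAt)
  have hQ1c : Continuous Q1 := Differentiable.continuous (fun t => (hQ1d t).differentiableAt)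
  have hyc : Continuous y := Differentiable.continuous (fun t => (hyd t).differentiableAt)
  have hydc : Continuous yd := Differentiable.continuous (fun t => (hydd t).differentiableAt)
  -- τ : the first zero of Q
  set Z : Set ℝ := Icc 0 T ∩ {t | Q t = 0} with hZdef
  have hZc : IsClosed Z := isClosed_Icc.inter (isClosed_eq hQc continuous_const)
  have hZne : Z.Nonempty := ⟨T, ⟨le_of_lt hT, le_refl T⟩, hQT⟩
  have hZbd : BddBelow Z := (bddBelow_Icc : BddBelow (Icc (0:ℝ) T)).mono (inter_subset_left)
  set τ : ℝ := sInf Z with hτdef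
  have hτZ : τ ∈ Z := hZc.csInf_mem hZne hZbd
  obtain ⟨⟨hτ0, hτT⟩, hQτ⟩ := hτZ
  have hτpos : 0 < τ := by
    rcases hτ0.lt_or_eq with h | h
    · exact h
    · exact absurd (h ▸ hQτ) hQ0'
  have hQpos : ∀ t, 0 ≤ t → t < τ → 0 < Q t := by
    intro t h0 hlt
    refine (hQnn t).lt_of_ne fun h => ?_
    exact absurd (csInf_le hZbd ⟨⟨h0, hlt.le.trans hτT⟩, h.symm⟩) (not_le.mpr hlt)
  -- W = sqrt Q and auxiliary functions
  set W : ℝ → ℝ := fun t => Real.sqrt (Q t) with hWdef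
  have hWc : Continuous W := Real.continuous_sqrt.comp hQc
  have hWsq : ∀ t, W t ^ 2 = Q t := fun t => Real.sq_sqrt (hQnn t)
  have hWpos : ∀ t, 0 < Q t → 0 < W t := fun t h => Real.sqrt_pos.mpr h
  set WD : ℝ → ℝ := fun t => Q1 t / (2 * W t) with hWDdef
  set G : ℝ → ℝ := fun t => WD t * y t - W t * yd t with hGdef
  set GD : ℝ → ℝ := fun t =>
    (Q2 t / (2 * W t) - (Q1 t)^2 / (4 * Q t * W t)) * y t - W t * ydd t with hGDdef
  have hWd : ∀ t, 0 < Q t → HasDerivAt W (WD t) t := by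
    intro t hq
    have h := (Real.hasStrictDerivAt_sqrt (ne_of_gt hq)).hasDerivAt.comp t (hQd t)
    have : 1 / (2 * Real.sqrt (Q t)) * Q1 t = WD t := by
      rw [hWDdef]; ring
    exact this ▸ h
  have hWDd : ∀ t, 0 < Q t →
      HasDerivAt WD (Q2 t / (2 * W t) - (Q1 t)^2 / (4 * Q t * W t)) t := by
    intro t hq
    have hw : 0 < W t := hWpos t hq
    have hden : HasDerivAt (fun t => 2 * W t) (2 * WD t) t := (hWd t hq).const_mul 2
    have h := (hQ1d t).div hden (by positivity)
    have heq : (Q2 t * (2 * W t) - Q1 t * (2 * WD t)) / (2 * W t)^2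
        = Q2 t / (2 * W t) - (Q1 t)^2 / (4 * Q t * W t) := by
      rw [hWDdef]
      rw [← hWsq t]
      field_simp
      ring
    exact heq ▸ h
  have hGd : ∀ t, 0 < Q t → HasDerivAt G (GD t) t := by
    intro t hq
    have h1 := ((hWDd t hq).mul (hyd t)).sub ((hWd t hq).mul (hydd t))
    have heq : (Q2 t / (2 * W t) - Q1 t ^2 / (4 * Q t * W t)) * y t + WD t * yd t
        - (WD t * yd t + W t * ydd t) = GD t := by rw [hGDdef]; ring
    exact heq ▸ h1
  set g : ℝ → ℝ := fun t => Real.exp (t/m) * G t with hgdef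
  have hexpd : ∀ t : ℝ, HasDerivAt (fun t : ℝ => Real.exp (t/m)) (Real.exp (t/m) * (1/m)) t := by
    intro t
    have h := (((hasDerivAt_id t).div_const m).exp)
    simpa [div_eq_mul_inv, mul_comm] using h
  have hgd : ∀ t, 0 < Q t →
      HasDerivAt g (Real.exp (t/m) * ((1/m) * G t + GD t)) t := by
    intro t hq
    have h := (hexpd t).mul (hGd t hq)
    have heq : Real.exp (t/m) * (1/m) * G t + Real.exp (t/m) * GD t
        = Real.exp (t/m) * ((1/m) * G t + GD t) := by ring
    exact heq ▸ h
  -- positivity of m * GD + G in (0, τ)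
  have hpos : ∀ t, 0 < t → t < τ → 0 < m * GD t + G t := by
    intro t ht0 htτ
    have hq : 0 < Q t := hQpos t ht0.le htτ
    have hw : 0 < W t := hWpos t hq
    have htT : t < T := lt_of_lt_of_le htτ hτT
    have hy : 0 < y t := hypos t ht0.le htT
    have hk := hkey t ht0.le htT.le hq
    have hyi := hyineq t ht0.le htT.le
    have hid : m * GD t + G t
        = y t * ((m * Q2 t + Q1 t + 2*κ*Q t) * (2 * Q t) - m * (Q1 t)^2) / (4 * Q t * W t)
          - W t * (m * ydd t + yd t + κ * y t) := by
      rw [hGDdef, hGdef, hWDdef]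
      simp only []
      rw [← hWsq t]
      field_simp
      ring
    rw [hid]
    have h1 : 0 < y t * ((m * Q2 t + Q1 t + 2*κ*Q t) * (2 * Q t) - m * (Q1 t)^2) / (4 * Q t * W t) := by
      apply div_pos (mul_pos hy (by linarith)) (by positivity)
    nlinarith [mul_nonneg hw.le (neg_nonneg.mpr hyi)]
  -- g is strictly monotone on [0, τ)
  have hgmono : StrictMonoOn g (Ico 0 τ) := by
    apply strictMonoOn_of_deriv_pos (convex_Ico 0 τ)
    · intro t ht
      have hq : 0 < Q t := hQpos t ht.1 ht.2
      exact ((hgd t hq).differentiableAt.continuousAt).continuousWithinAt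
    · intro t ht
      rw [interior_Ico] at ht
      have hq : 0 < Q t := hQpos t ht.1.le ht.2
      rw [(hgd t hq).deriv]
      have hexp : 0 < Real.exp (t/m) := Real.exp_pos _
      have h2 : 0 < 1/m * G t + GD t := by
        have he : 1/m * G t + GD t = (m * GD t + G t)/m := by field_simp; ring
        rw [he]; exact div_pos (hpos t ht.1 ht.2) hm
      exact mul_pos hexp h2
  have hG0 : 0 ≤ G 0 := by
    rw [hGdef, hWDdef]
    simp only [hQ10, zero_div]
    have : (0:ℝ) - W 0 * yd 0 = W 0 * (-yd 0) := by ring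
    rw [zero_mul, this]
    exact mul_nonneg (Real.sqrt_nonneg _) (by linarith)
  have hg0 : 0 ≤ g 0 := by
    have : g 0 = Real.exp (0/m) * G 0 := rfl
    rw [this]
    exact mul_nonneg (Real.exp_pos _).le hG0
  have ht₀ : τ/2 ∈ Ico 0 τ := ⟨by linarith, by linarith⟩
  have h0mem : (0:ℝ) ∈ Ico 0 τ := ⟨le_refl 0, hτpos⟩
  have hgt₀ : 0 < g (τ/2) := lt_of_le_of_lt hg0 (hgmono h0mem ht₀ (by linarith))
  have hGpos : ∀ t, 0 < t → t < τ → 0 < G t := by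
    intro t h1 h2
    have hgt : 0 < g t := lt_of_le_of_lt hg0 (hgmono h0mem ⟨h1.le, h2⟩ h1)
    by_contra hc
    push_neg at hc
    have : g t ≤ 0 := mul_nonpos_of_nonneg_of_nonpos (Real.exp_pos _).le hc
    linarith
  have hWτ : W τ = 0 := by rw [hWdef]; simp only []; rw [hQτ, Real.sqrt_zero]
  have hyτnn : 0 ≤ y τ := by
    rcases lt_or_eq_of_le hτT with h | h
    · exact (hypos τ hτ0 h).le
    · rw [h]
      have htd : Tendsto y (𝓝[<] T) (𝓝 (y T)) := (hyc.tendsto T).mono_left nhdsWithin_le_nhds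
      refine ge_of_tendsto htd ?_
      filter_upwards [Ioo_mem_nhdsLT_of_mem (⟨hT, le_refl T⟩ : T ∈ Ioc 0 T)] with t ht
      exact (hypos t ht.1.le ht.2).le
  rcases hyτnn.lt_or_eq with hyτpos | hyτzero
  · -- y τ > 0 : the ratio W/y is monotone, contradiction
    set r : ℝ → ℝ := fun t => W t / y t with hrdef
    have hy_on : ∀ t ∈ Icc (τ/2) τ, 0 < y t := by
      intro t ⟨h1, h2⟩
      rcases h2.lt_or_eq with h | h
      · exact hypos t (by linarith) (lt_of_lt_of_le h hτT)
      · rw [h]; exact hyτpos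
    have hrmono : MonotoneOn r (Icc (τ/2) τ) := by
      apply monotoneOn_of_deriv_nonneg (convex_Icc _ _)
      · exact (hWc.continuousOn).div (hyc.continuousOn) (fun t ht => ne_of_gt (hy_on t ht))
      · rw [interior_Icc]
        intro t ht
        have hq : 0 < Q t := hQpos t (by linarith [ht.1]) ht.2
        have hyt : 0 < y t := hy_on t ⟨ht.1.le, ht.2.le⟩
        exact ((hWd t hq).div (hyd t) (ne_of_gt hyt)).differentiableAt.differentiableWithinAt
      · rw [interior_Icc]
        intro t ht
        have hq : 0 < Q t := hQpos t (by linarith [ht.1]) ht.2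
        have hyt : 0 < y t := hy_on t ⟨ht.1.le, ht.2.le⟩
        rw [show deriv r t = deriv (W / y) t from rfl, ((hWd t hq).div (hyd t) (ne_of_gt hyt)).deriv]
        have hGt : 0 < G t := hGpos t (by linarith [ht.1]) ht.2
        have : WD t * y t - W t * yd t = G t := rfl
        rw [this]
        positivity
    have h1 : r (τ/2) ≤ r τ :=
      hrmono ⟨le_refl _, by linarith⟩ ⟨by linarith, le_refl _⟩ (by linarith)
    have h2 : r τ = 0 := by rw [hrdef]; simp only []; rw [hWτ, zero_div]
    have h3 : 0 < r (τ/2) := by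
      have hq : 0 < Q (τ/2) := hQpos _ (by linarith) (by linarith)
      exact div_pos (hWpos _ hq) (hy_on _ ⟨le_refl _, by linarith⟩)
    linarith [h1, h2 ▸ h1]
  · -- y τ = 0 : G tends to 0 at τ⁻, contradicting strict monotonicity of g
    have hmem : Ioo (τ/2) τ ∈ 𝓝[<] τ := Ioo_mem_nhdsLT_of_mem ⟨by linarith, le_refl τ⟩
    have h2 : Tendsto (fun t => W t * yd t) (𝓝[<] τ) (𝓝 0) := by
      have := ((hWc.mul hydc).tendsto τ).mono_left (nhdsWithin_le_nhds (s := Iio τ))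
      rw [Pi.mul_apply, hWτ, zero_mul] at this; exact this
    have h1 : Tendsto (fun t => WD t * y t) (𝓝[<] τ) (𝓝 0) := by
      apply squeeze_zero_norm' (a := fun t => Real.sqrt (P t) * |y t|)
      · filter_upwards [hmem] with t ht
        have hq : 0 < Q t := hQpos t (by linarith [ht.1]) ht.2
        have hw : 0 < W t := hWpos t hq
        have hWD : |WD t| ≤ Real.sqrt (P t) := by
          apply Real.abs_le_sqrt
          have : WD t ^ 2 = Q1 t ^2 / (4 * Q t) := by
            rw [hWDdef]; simp only []
            rw [div_pow, mul_pow, ← hWsq t]; norm_num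
          rw [this, div_le_iff₀ (by positivity)]
          calc Q1 t ^2 ≤ 4 * P t * Q t := hCS t
            _ = P t * (4 * Q t) := by ring
        calc ‖WD t * y t‖ = |WD t| * |y t| := abs_mul _ _
          _ ≤ Real.sqrt (P t) * |y t| := by gcongr
      · have := ((hPc.sqrt.mul hyc.abs).tendsto τ).mono_left (nhdsWithin_le_nhds (s := Iio τ))
        simp only [Pi.mul_apply, ← hyτzero, abs_zero, mul_zero] at this; exact this
    have hGlim : Tendsto G (𝓝[<] τ) (𝓝 0) := by
      have := h1.sub h2
      rwa [sub_zero] at this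
    have hglim : Tendsto g (𝓝[<] τ) (𝓝 0) := by
      have hexp : Tendsto (fun t => Real.exp (t/m)) (𝓝[<] τ) (𝓝 (Real.exp (τ/m))) :=
        ((Real.continuous_exp.comp (continuous_id.div_const m)).tendsto τ).mono_left
          (nhdsWithin_le_nhds (s := Iio τ))
      have := hexp.mul hGlim
      rwa [mul_zero] at this
    have hle : g (τ/2) ≤ 0 := by
      refine ge_of_tendsto hglim ?_
      filter_upwards [hmem] with t ht
      exact (hgmono ht₀ ⟨by linarith [ht.1], ht.2⟩ ht.1).le
    linarith

open Filter Topology Set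

lemma exists_good_y {κ m tstar : ℝ} (hκ : 0 < κ) (hm : 0 < m) (htstar : 0 < tstar)
    (hreg : m * κ ≤ 1 / 4 ∨
      (1 / 4 < m * κ ∧
        tstar ≤ Real.pi * m / Real.sqrt (4 * m * κ - 1) +
          2 * m / Real.sqrt (4 * m * κ - 1) * Real.arcsin (1 / Real.sqrt (4 * m * κ)))) :
    ∃ y yd ydd : ℝ → ℝ,
      (∀ t, HasDerivAt y (yd t) t) ∧ (∀ t, HasDerivAt yd (ydd t) t) ∧
      0 < y 0 ∧ (∀ t, 0 ≤ t → t < tstar → 0 < y t) ∧ yd 0 ≤ 0 ∧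
      (∀ t, 0 ≤ t → t ≤ tstar → m * ydd t + yd t + κ * y t ≤ 0) := by
  rcases hreg with hmk | ⟨hmk, ht⟩
  · -- overdamped case : y = exp (-t/(2m))
    refine ⟨fun t => Real.exp (-(t/(2*m))), fun t => Real.exp (-(t/(2*m))) * (-(1/(2*m))),
      fun t => Real.exp (-(t/(2*m))) * (-(1/(2*m))) * (-(1/(2*m))), ?_, ?_, ?_, ?_, ?_, ?_⟩
    · intro t
      exact (((hasDerivAt_id t).div_const (2*m)).neg).exp
    · intro t
      exact ((((hasDerivAt_id t).div_const (2*m)).neg).exp).mul_const _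
    · positivity
    · intro t _ _; positivity
    · have h1 : (0:ℝ) < 1/(2*m) := by positivity
      have h2 : (0:ℝ) < Real.exp (-(0/(2*m))) := Real.exp_pos _
      nlinarith
    · intro t _ _
      have he : (0:ℝ) < Real.exp (-(t/(2*m))) := Real.exp_pos _
      have h2 : κ - 1/(4*m) ≤ 0 := by
        rw [sub_nonpos, le_div_iff₀ (by positivity)]; linarith
      have hc : m * (Real.exp (-(t/(2*m))) * (-(1/(2*m))) * (-(1/(2*m))))
          + Real.exp (-(t/(2*m))) * (-(1/(2*m))) + κ * Real.exp (-(t/(2*m)))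
          = Real.exp (-(t/(2*m))) * (κ - 1/(4*m)) := by
        field_simp
        ring
      rw [hc]
      exact mul_nonpos_of_nonneg_of_nonpos he.le h2
  · -- underdamped case
    have h4 : (0:ℝ) < 4*m*κ - 1 := by nlinarith
    set s : ℝ := Real.sqrt (4*m*κ - 1) with hsdef
    have hs : 0 < s := Real.sqrt_pos.mpr h4
    have hs2 : s^2 = 4*m*κ - 1 := Real.sq_sqrt h4.le
    set c : ℝ := Real.sqrt (4*m*κ) with hcdef
    have hc : 0 < c := Real.sqrt_pos.mpr (by nlinarith)
    have hc2 : c^2 = 4*m*κ := Real.sq_sqrt (by nlinarith)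
    have hc1 : 1 < c := by nlinarith
    set α : ℝ := Real.arcsin (1/c) with hαdef
    have h1c : (0:ℝ) < 1/c := by positivity
    have hsin : Real.sin α = 1/c :=
      Real.sin_arcsin (by linarith) ((div_le_one hc).mpr hc1.le)
    have hcos : Real.cos α = s/c := by
      rw [hαdef, Real.cos_arcsin]
      have he : 1 - (1/c)^2 = (s/c)^2 := by
        rw [div_pow, div_pow, hs2, hc2]
        field_simp
      rw [he, Real.sqrt_sq (by positivity)]
    have hα1 : 0 < α := Real.arcsin_pos.mpr h1c
    have hα2 : α < Real.pi/2 := Real.arcsin_lt_pi_div_two.mpr ((div_lt_one hc).mpr hc1)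
    set ω : ℝ := s/(2*m) with hωdef
    have hω : 0 < ω := by positivity
    have hω2 : ω^2 = (4*m*κ-1)/(4*m^2) := by
      rw [hωdef, div_pow, hs2]; congr 1; ring
    refine ⟨fun t => Real.exp (-(t/(2*m))) * Real.cos (ω*t - α),
      fun t => Real.exp (-(t/(2*m))) *
        (-(1/(2*m)) * Real.cos (ω*t - α) - ω * Real.sin (ω*t - α)),
      fun t => Real.exp (-(t/(2*m))) *
        ((1/(4*m^2) - ω^2) * Real.cos (ω*t - α) + (ω/m) * Real.sin (ω*t - α)),
      ?_, ?_, ?_, ?_, ?_, ?_⟩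
    · intro t
      have h1 : HasDerivAt (fun t : ℝ => -(t/(2*m))) (-(1/(2*m))) t := by
        exact ((hasDerivAt_id t).div_const (2*m)).neg
      have h3 : HasDerivAt (fun t : ℝ => ω*t - α) ω t := by
        simpa using ((hasDerivAt_id t).const_mul ω).sub_const α
      have h5 := (h1.exp).fun_mul h3.cos
      refine h5.congr_deriv ?_
      ring
    · intro t
      have h1 : HasDerivAt (fun t : ℝ => -(t/(2*m))) (-(1/(2*m))) t := by
        exact ((hasDerivAt_id t).div_const (2*m)).neg
      have h3 : HasDerivAt (fun t : ℝ => ω*t - α) ω t := by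
        simpa using ((hasDerivAt_id t).const_mul ω).sub_const α
      have h6 : HasDerivAt (fun t : ℝ => -(1/(2*m)) * Real.cos (ω*t - α) - ω * Real.sin (ω*t - α))
          (-(1/(2*m)) * (-Real.sin (ω*t - α) * ω) - ω * (Real.cos (ω*t - α) * ω)) t :=
        ((h3.cos).const_mul (-(1/(2*m)))).sub ((h3.sin).const_mul ω)
      have h5 := (h1.exp).fun_mul h6
      refine h5.congr_deriv ?_
      field_simp
      ring
    · show 0 < Real.exp (-(0/(2*m))) * Real.cos (ω*0 - α)
      have he : ω*0 - α = -α := by ring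
      rw [he, Real.cos_neg, hcos]
      positivity
    · intro t ht0 httstar
      apply mul_pos (Real.exp_pos _)
      apply Real.cos_pos_of_mem_Ioo
      constructor
      · have h0t : 0 ≤ ω*t := by positivity
        linarith [hα2]
      · have hb : Real.pi*m/s + 2*m/s*α = (Real.pi/2 + α)/ω := by
          rw [hωdef]; field_simp
        have ht' : t < (Real.pi/2 + α)/ω := by
          rw [← hb]; exact lt_of_lt_of_le httstar ht
        have := (lt_div_iff₀ hω).mp ht'
        linarith
    · show Real.exp (-(0/(2*m))) * (-(1/(2*m)) * Real.cos (ω*0 - α) - ω * Real.sin (ω*0 - α)) ≤ 0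
      have he : ω*0 - α = -α := by ring
      rw [he, Real.cos_neg, Real.sin_neg, hcos, hsin]
      have : -(1/(2*m)) * (s/c) - ω * -(1/c) = 0 := by
        rw [hωdef]; field_simp; ring
      rw [this, mul_zero]
    · intro t _ _
      have hkey : m * (1/(4*m^2) - ω^2) + (-(1/(2*m))) + κ = 0 := by
        rw [hω2]; field_simp; ring
      have hkey2 : m * (ω/m) - ω = 0 := by field_simp; ring
      have hid : m * (Real.exp (-(t/(2*m))) *
            ((1/(4*m^2) - ω^2) * Real.cos (ω*t - α) + (ω/m) * Real.sin (ω*t - α)))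
          + Real.exp (-(t/(2*m))) * (-(1/(2*m)) * Real.cos (ω*t - α) - ω * Real.sin (ω*t - α))
          + κ * (Real.exp (-(t/(2*m))) * Real.cos (ω*t - α))
          = Real.exp (-(t/(2*m))) * (Real.cos (ω*t - α) * (m * (1/(4*m^2) - ω^2) + (-(1/(2*m))) + κ)
            + Real.sin (ω*t - α) * (m * (ω/m) - ω)) := by ring
      rw [hid, hkey, hkey2]
      simp


set_option maxHeartbeats 1000000 in
/-- Proposition 5.2 (1): determinability of `θ̇(t*)` from `θ(t*)` and `θ̇(0)`
in the regime `mκ ≤ 1/4`, or `mκ > 1/4` with `t*` below the critical time. -/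
theorem stmt13 (κ m tstar : ℝ) (hκ : 0 < κ) (hm : 0 < m) (htstar : 0 < tstar)
    (hreg : m * κ ≤ 1 / 4 ∨
      (1 / 4 < m * κ ∧
        tstar ≤ Real.pi * m / Real.sqrt (4 * m * κ - 1) +
          2 * m / Real.sqrt (4 * m * κ - 1) * Real.arcsin (1 / Real.sqrt (4 * m * κ))))
    (N : ℕ) (hN : 1 ≤ N) (ν : Fin N → ℝ)
    (θ φ : Fin N → ℝ → ℝ)
    (hθsmooth : ∀ i, ContDiff ℝ (⊤ : ℕ∞) (θ i))
    (hφsmooth : ∀ i, ContDiff ℝ (⊤ : ℕ∞) (φ i))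
    (hθ : ∀ i, ∀ t : ℝ, 0 ≤ t →
      m * deriv (deriv (θ i)) t + deriv (θ i) t
        = ν i + (κ / N) * ∑ j, Real.sin (θ j t - θ i t))
    (hφ : ∀ i, ∀ t : ℝ, 0 ≤ t →
      m * deriv (deriv (φ i)) t + deriv (φ i) t
        = ν i + (κ / N) * ∑ j, Real.sin (φ j t - φ i t))
    (h0 : ∀ i, deriv (θ i) 0 = deriv (φ i) 0)
    (hts : ∀ i, θ i tstar = φ i tstar) :
    ∀ i, deriv (θ i) tstar = deriv (φ i) tstar := by
  have hN0 : 0 < N := hN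
  have hNR : (0:ℝ) < N := by exact_mod_cast hN0
  -- basic differentiability
  have hθd : ∀ i t, HasDerivAt (θ i) (deriv (θ i) t) t :=
    fun i t => ((hθsmooth i).differentiable (by simp) t).hasDerivAt
  have hφd : ∀ i t, HasDerivAt (φ i) (deriv (φ i) t) t :=
    fun i t => ((hφsmooth i).differentiable (by simp) t).hasDerivAt
  have hθdd : ∀ i t, HasDerivAt (deriv (θ i)) (deriv (deriv (θ i)) t) t := by
    intro i t
    have h1 : ContDiff ℝ ((⊤:ℕ∞):WithTop ℕ∞) (θ i) := (hθsmooth i).of_le (by simp)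
    exact (((contDiff_infty_iff_deriv.mp h1).2.differentiable (by simp)) t).hasDerivAt
  have hφdd : ∀ i t, HasDerivAt (deriv (φ i)) (deriv (deriv (φ i)) t) t := by
    intro i t
    have h1 : ContDiff ℝ ((⊤:ℕ∞):WithTop ℕ∞) (φ i) := (hφsmooth i).of_le (by simp)
    exact (((contDiff_infty_iff_deriv.mp h1).2.differentiable (by simp)) t).hasDerivAt
  set u : Fin N → ℝ → ℝ := fun i t => θ i t - φ i t with hu
  set v : Fin N → ℝ → ℝ := fun i t => deriv (θ i) t - deriv (φ i) t with hv
  set w : Fin N → ℝ → ℝ := fun i t => deriv (deriv (θ i)) t - deriv (deriv (φ i)) t with hw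
  have hud : ∀ i t, HasDerivAt (u i) (v i t) t := fun i t => (hθd i t).sub (hφd i t)
  have hvd : ∀ i t, HasDerivAt (v i) (w i t) t := fun i t => (hθdd i t).sub (hφdd i t)
  set Q : ℝ → ℝ := fun t => ∑ i, (u i t)^2 with hQdef
  set Q1 : ℝ → ℝ := fun t => ∑ i, 2*(u i t * v i t) with hQ1def
  set Q2 : ℝ → ℝ := fun t => ∑ i, 2*(v i t * v i t + u i t * w i t) with hQ2def
  set P : ℝ → ℝ := fun t => ∑ i, (v i t)^2 with hPdef
  set P1 : ℝ → ℝ := fun t => ∑ i, 2*(v i t * w i t) with hP1def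
  have hQd : ∀ t, HasDerivAt Q (Q1 t) t := by
    intro t
    exact HasDerivAt.fun_sum fun i _ => by simpa [mul_assoc] using (hud i t).fun_pow 2
  have hQ1d : ∀ t, HasDerivAt Q1 (Q2 t) t := by
    intro t
    exact HasDerivAt.fun_sum fun i _ => ((hud i t).fun_mul (hvd i t)).const_mul 2
  have hPd : ∀ t, HasDerivAt P (P1 t) t := by
    intro t
    exact HasDerivAt.fun_sum fun i _ => by simpa [mul_assoc] using (hvd i t).fun_pow 2
  have hQnn : ∀ t, 0 ≤ Q t := fun t => Finset.sum_nonneg fun i _ => sq_nonneg _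
  have hPnn : ∀ t, 0 ≤ P t := fun t => Finset.sum_nonneg fun i _ => sq_nonneg _
  have hQT : Q tstar = 0 := Finset.sum_eq_zero fun i _ => by
    simp only [hu]; rw [hts i]; ring
  have hv0 : ∀ i, v i 0 = 0 := fun i => by simp only [hv]; rw [h0 i]; ring
  have hQ10 : Q1 0 = 0 := Finset.sum_eq_zero fun i _ => by rw [hv0 i]; ring
  have hvc : ∀ i, Continuous (v i) :=
    fun i => Differentiable.continuous (fun t => (hvd i t).differentiableAt)
  have hPc : Continuous P := continuous_finset_sum _ fun i _ => (hvc i).pow 2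
  have hCS : ∀ t, (Q1 t)^2 ≤ 4 * P t * Q t := by
    intro t
    have h := Finset.sum_mul_sq_le_sq_mul_sq Finset.univ (fun i => u i t) (fun i => v i t)
    have hQ1t : Q1 t = 2 * ∑ i, u i t * v i t := by
      rw [hQ1def]; simp only []; rw [Finset.mul_sum]
    calc (Q1 t)^2 = 4*(∑ i, u i t * v i t)^2 := by rw [hQ1t]; ring
      _ ≤ 4*((∑ i, (u i t)^2) * ∑ i, (v i t)^2) := by linarith
      _ = 4 * P t * Q t := by rw [hQdef, hPdef]; ring
  -- the ODE for the difference
  have hODE : ∀ i t, 0 ≤ t → m * w i t + v i t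
      = (κ/(N:ℝ)) * ∑ j, (Real.sin (θ j t - θ i t) - Real.sin (φ j t - φ i t)) := by
    intro i t ht
    have h1 := hθ i t ht
    have h2 := hφ i t ht
    have h3 : m * w i t + v i t
        = (m * deriv (deriv (θ i)) t + deriv (θ i) t)
          - (m * deriv (deriv (φ i)) t + deriv (φ i) t) := by
      simp only [hw, hv]; ring
    rw [h3, h1, h2, Finset.sum_sub_distrib]
    ring
  -- key differential inequality
  have hkey : ∀ t, 0 ≤ t → t ≤ tstar → 0 < Q t →
      m * (Q1 t)^2 < (m * Q2 t + Q1 t + 2*κ*Q t) * (2 * Q t) := by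
    intro t ht0 _ hQt
    have hne : ∃ i, θ i t ≠ φ i t := by
      by_contra hc
      push_neg at hc
      have : Q t = 0 := Finset.sum_eq_zero fun i _ => by
        simp only [hu]; rw [hc i]; ring
      rw [this] at hQt; exact lt_irrefl 0 hQt
    have hkeyS := key_sum hN0 hκ (fun i => θ i t) (fun i => φ i t) hne
    set X : ℝ := ∑ i, u i t * (m * w i t + v i t) with hX
    have hXpos : 0 < X + κ * Q t := by
      have e1 : X = ∑ i, (θ i t - φ i t)
          * ((κ/(N:ℝ)) * ∑ j, (Real.sin (θ j t - θ i t) - Real.sin (φ j t - φ i t))) := by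
        rw [hX]
        exact Finset.sum_congr rfl fun i _ => by rw [hODE i t ht0]
      have e2 : Q t = ∑ i, (θ i t - φ i t)^2 := rfl
      rw [e1, e2]
      exact hkeyS
    have hXeq : m * Q2 t + Q1 t = 2*m*P t + 2*X := by
      calc m * Q2 t + Q1 t
          = ∑ i, (m * (2*(v i t * v i t + u i t * w i t)) + 2*(u i t * v i t)) := by
            rw [hQ2def, hQ1def]; simp only []
            rw [Finset.mul_sum, ← Finset.sum_add_distrib]
        _ = ∑ i, (2*m*(v i t)^2 + 2*(u i t * (m * w i t + v i t))) :=
            Finset.sum_congr rfl fun i _ => by ring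
        _ = (∑ i, 2*m*(v i t)^2) + ∑ i, 2*(u i t * (m * w i t + v i t)) :=
            Finset.sum_add_distrib
        _ = 2*m*P t + 2*X := by
            rw [hPdef, hX]; simp only []
            rw [← Finset.mul_sum, ← Finset.mul_sum]
    have hCSt := hCS t
    nlinarith [mul_le_mul_of_nonneg_left hCSt hm.le, mul_pos hQt hXpos, hm, hQt, hPnn t]
  -- apply the comparison lemma
  obtain ⟨y, yd, ydd, hyd, hydd, hy0, hypos, hyd0, hyineq⟩ :=
    exists_good_y hκ hm htstar hreg
  have hQ0 : Q 0 = 0 :=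
    core_comparison hm htstar hQd hQ1d hyd hydd hQnn hQT hQ10 hPc hCS hkey hy0 hypos hyd0 hyineq
  have hu0 : ∀ i, u i 0 = 0 := by
    intro i
    have h := (Finset.sum_eq_zero_iff_of_nonneg (fun i (_ : i ∈ Finset.univ) => sq_nonneg (u i 0))).mp hQ0
    exact pow_eq_zero_iff (two_ne_zero) |>.mp (h i (Finset.mem_univ i))
  -- Gronwall argument
  set R : Fin N → ℝ → ℝ :=
    fun i t => (κ/(N:ℝ)) * ∑ j, (Real.sin (θ j t - θ i t) - Real.sin (φ j t - φ i t)) with hRdef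
  have hODE' : ∀ i t, 0 ≤ t → m * w i t + v i t = R i t := by
    intro i t ht
    simp only [hRdef]
    exact hODE i t ht
  have hR2 : ∀ t, 0 ≤ t → ∑ i, (R i t)^2 ≤ 4*κ^2*Q t := by
    intro t ht
    have hper : ∀ i, (R i t)^2 ≤ (2*κ^2/(N:ℝ))*Q t + 2*κ^2*(u i t)^2 := by
      intro i
      have habs : |∑ j, (Real.sin (θ j t - θ i t) - Real.sin (φ j t - φ i t))|
          ≤ ∑ j, (|u j t| + |u i t|) := by
        refine (Finset.abs_sum_le_sum_abs _ _).trans (Finset.sum_le_sum fun j _ => ?_)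
        have h1 : |Real.sin (θ j t - θ i t) - Real.sin (φ j t - φ i t)|
            ≤ |(θ j t - θ i t) - (φ j t - φ i t)| := abs_sin_sub_sin_le _ _
        have h2 : (θ j t - θ i t) - (φ j t - φ i t) = u j t - u i t := by
          simp only [hu]; ring
        rw [h2] at h1
        exact h1.trans (abs_sub _ _)
      have hb_nn : 0 ≤ ∑ j, (|u j t| + |u i t|) :=
        Finset.sum_nonneg fun j _ => by positivity
      have hsq : (∑ j, (Real.sin (θ j t - θ i t) - Real.sin (φ j t - φ i t)))^2
          ≤ (∑ j, (|u j t| + |u i t|))^2 := by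
        rw [← sq_abs (∑ j, (Real.sin (θ j t - θ i t) - Real.sin (φ j t - φ i t)))]
        exact pow_le_pow_left₀ (abs_nonneg _) habs 2
      have hsq2 : (∑ j, (|u j t| + |u i t|))^2 ≤ (N:ℝ) * ∑ j, (|u j t| + |u i t|)^2 := by
        have := sq_sum_le_card_mul_sum_sq (s := Finset.univ) (f := fun j => |u j t| + |u i t|)
        simpa using this
      have hsq3 : ∑ j, (|u j t| + |u i t|)^2 ≤ 2*Q t + (N:ℝ)*(2*(u i t)^2) := by
        have h1 : ∀ j, (|u j t| + |u i t|)^2 ≤ 2*(u j t)^2 + 2*(u i t)^2 := by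
          intro j
          nlinarith [sq_abs (u j t), sq_abs (u i t), abs_nonneg (u j t), abs_nonneg (u i t),
            sq_nonneg (|u j t| - |u i t|)]
        calc ∑ j, (|u j t| + |u i t|)^2 ≤ ∑ j, (2*(u j t)^2 + 2*(u i t)^2) :=
              Finset.sum_le_sum fun j _ => h1 j
          _ = 2*Q t + (N:ℝ)*(2*(u i t)^2) := by
              rw [Finset.sum_add_distrib, Finset.sum_const, Finset.card_univ, Fintype.card_fin,
                ← Finset.mul_sum, nsmul_eq_mul, hQdef]
      have hRsq : (R i t)^2 = (κ/(N:ℝ))^2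
          * (∑ j, (Real.sin (θ j t - θ i t) - Real.sin (φ j t - φ i t)))^2 := by
        simp only [hRdef]; rw [mul_pow]
      rw [hRsq]
      have hc1 : (κ/(N:ℝ))^2 * (∑ j, (Real.sin (θ j t - θ i t) - Real.sin (φ j t - φ i t)))^2
          ≤ (κ/(N:ℝ))^2 * ((N:ℝ) * (2*Q t + (N:ℝ)*(2*(u i t)^2))) := by
        have h5 : (∑ j, (Real.sin (θ j t - θ i t) - Real.sin (φ j t - φ i t)))^2
            ≤ (N:ℝ) * (2*Q t + (N:ℝ)*(2*(u i t)^2)) := by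
          refine (hsq.trans hsq2).trans ?_
          have : (0:ℝ) ≤ (N:ℝ) := hNR.le
          nlinarith [hsq3]
        exact mul_le_mul_of_nonneg_left h5 (by positivity)
      refine hc1.trans (le_of_eq ?_)
      field_simp
    calc ∑ i, (R i t)^2 ≤ ∑ i, ((2*κ^2/(N:ℝ))*Q t + 2*κ^2*(u i t)^2) :=
          Finset.sum_le_sum fun i _ => hper i
      _ = (N:ℝ)*((2*κ^2/(N:ℝ))*Q t) + 2*κ^2*Q t := by
          rw [Finset.sum_add_distrib, Finset.sum_const, Finset.card_univ, Fintype.card_fin,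
            ← Finset.mul_sum, nsmul_eq_mul, hQdef]
      _ = 4*κ^2*Q t := by field_simp; ring
  set C : ℝ := 1 + (1 + 4*κ^2)/m with hC
  set V : ℝ → ℝ := fun t => Q t + P t with hV
  have hVd : ∀ t, HasDerivAt V (Q1 t + P1 t) t := fun t => (hQd t).add (hPd t)
  have hVineq : ∀ t, 0 ≤ t → t ≤ tstar → Q1 t + P1 t ≤ C * V t := by
    intro t ht0 ht1
    have hQ1b : Q1 t ≤ Q t + P t := by
      show (∑ i, 2*(u i t * v i t)) ≤ (∑ i, (u i t)^2) + ∑ i, (v i t)^2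
      rw [← Finset.sum_add_distrib]
      exact Finset.sum_le_sum fun i _ => by nlinarith [sq_nonneg (u i t - v i t)]
    have hP1b : P1 t ≤ (P t + ∑ i, (R i t)^2)/m := by
      have he : (P t + ∑ i, (R i t)^2)/m = ∑ i, ((v i t)^2 + (R i t)^2)/m := by
        show ((∑ i, (v i t)^2) + ∑ i, (R i t)^2)/m = ∑ i, ((v i t)^2 + (R i t)^2)/m
        rw [← Finset.sum_add_distrib, Finset.sum_div]
      rw [he]
      show (∑ i, 2*(v i t * w i t)) ≤ ∑ i, ((v i t)^2 + (R i t)^2)/m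
      refine Finset.sum_le_sum fun i _ => ?_
      rw [le_div_iff₀ hm, ← hODE' i t ht0]
      nlinarith [sq_nonneg (v i t), sq_nonneg (m * w i t)]
    have hR2t := hR2 t ht0
    have h8 : (P t + ∑ i, (R i t)^2)/m ≤ (P t + 4*κ^2*Q t)/m := by
      gcongr
    have h9 : (P t + 4*κ^2*Q t)/m ≤ ((1+4*κ^2)*(Q t + P t))/m := by
      gcongr
      nlinarith [hQnn t, hPnn t, sq_nonneg κ]
    have hCV : C * V t = (Q t + P t) + ((1+4*κ^2)*(Q t + P t))/m := by
      show (1 + (1 + 4*κ^2)/m) * (Q t + P t) = (Q t + P t) + ((1+4*κ^2)*(Q t + P t))/m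
      field_simp
    rw [hCV]
    linarith
  set F : ℝ → ℝ := fun t => Real.exp (-C*t) * V t with hF
  have hFd : ∀ t, HasDerivAt F (Real.exp (-C*t) * ((Q1 t + P1 t) - C * V t)) t := by
    intro t
    have h1 : HasDerivAt (fun s : ℝ => -C*s) (-C) t := by
      simpa using (hasDerivAt_id t).const_mul (-C)
    have h2 := (h1.exp).fun_mul (hVd t)
    refine h2.congr_deriv ?_
    ring
  have hFanti : AntitoneOn F (Icc 0 tstar) := by
    apply antitoneOn_of_deriv_nonpos (convex_Icc _ _)
    · exact (Differentiable.continuous fun t => (hFd t).differentiableAt).continuousOn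
    · intro t _
      exact (hFd t).differentiableAt.differentiableWithinAt
    · intro t ht
      rw [interior_Icc] at ht
      rw [(hFd t).deriv]
      have h7 := hVineq t ht.1.le ht.2.le
      exact mul_nonpos_of_nonneg_of_nonpos (Real.exp_pos _).le (by linarith)
  have hP0 : P 0 = 0 := Finset.sum_eq_zero fun i _ => by rw [hv0 i]; ring
  have hF0 : F 0 = 0 := by
    show Real.exp (-C*0) * (Q 0 + P 0) = 0
    rw [hQ0, hP0]
    ring
  have hle : F tstar ≤ 0 := by
    have := hFanti (left_mem_Icc.mpr htstar.le) (right_mem_Icc.mpr htstar.le) htstar.le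
    rwa [hF0] at this
  have hVts : V tstar = 0 := by
    have h1 : 0 ≤ V tstar :=
      add_nonneg (hQnn tstar) (hPnn tstar)
    have h2 : Real.exp (-C*tstar) * V tstar ≤ 0 := hle
    nlinarith [Real.exp_pos (-C*tstar)]
  have hPts : P tstar = 0 := by
    have h1 : Q tstar + P tstar = 0 := hVts
    linarith [hQnn tstar, hPnn tstar]
  intro i
  have h := (Finset.sum_eq_zero_iff_of_nonneg
    (fun i (_ : i ∈ Finset.univ) => sq_nonneg (v i tstar))).mp hPts i (Finset.mem_univ i)
  have hvi : v i tstar = 0 := pow_eq_zero_iff (two_ne_zero) |>.mp h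
  have h2 : deriv (θ i) tstar - deriv (φ i) tstar = 0 := hvi
  linarith
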